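/- Let E be a real inner product space, Y a nonempty set, f : E × Y → ℝ, b > 0, and m ∈ ℝ with f(x, y) ≥ m for all (x, y). Suppose for every k, y_{k+1} globally minimizes y ↦ f(x_k, y), and x_{k+1} globally minimizes x ↦ f(x, y_{k+1}) + (b/2)·‖x − x_k‖². Then ‖x_{k+1} − x_k‖ → 0 as k → ∞. -/
import Mathlib


open Filter

/-- The distance between consecutive iterates of proximally regularized
alternating minimization of a function bounded below tends to zero. -/
theorem prox_alternating_gap_tendsto_zero
    {E : Type*} [NormedAddCommGroup E] [InnerProductSpace ℝ E]
    {Y : Type*} [Nonempty Y]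
    (f : E × Y → ℝ) (b : ℝ) (hb : 0 < b)
    (m : ℝ) (hm : ∀ x : E, ∀ y : Y, m ≤ f (x, y))
    (x : ℕ → E) (y : ℕ → Y)
    (hy : ∀ k, ∀ y' : Y, f (x k, y (k + 1)) ≤ f (x k, y'))
    (hx : ∀ k, ∀ x' : E,
      f (x (k + 1), y (k + 1)) + (b / 2) * ‖x (k + 1) - x k‖ ^ 2 ≤
        f (x', y (k + 1)) + (b / 2) * ‖x' - x k‖ ^ 2) :
    Tendsto (fun k => ‖x (k + 1) - x k‖) atTop (nhds 0) := by
  set F : ℕ → ℝ := fun k => f (x k, y k) with hF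
  have key : ∀ k, F (k + 1) + (b / 2) * ‖x (k + 1) - x k‖ ^ 2 ≤ F k := by
    intro k
    have h1 := hx k (x k)
    simp only [sub_self, norm_zero] at h1
    have h2 := hy k (y k)
    calc F (k + 1) + (b / 2) * ‖x (k + 1) - x k‖ ^ 2
        ≤ f (x k, y (k + 1)) + (b / 2) * 0 ^ 2 := h1
      _ = f (x k, y (k + 1)) := by ring
      _ ≤ F k := h2
  have hanti : Antitone F := antitone_nat_of_succ_le fun k => by
    nlinarith [key k, sq_nonneg ‖x (k + 1) - x k‖]
  have hbdd : ∀ k, m ≤ F k := fun k => hm _ _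
  have hconv : Tendsto F atTop (nhds (⨅ k, F k)) :=
    tendsto_atTop_ciInf hanti ⟨m, fun r ⟨k, hk⟩ => hk ▸ hbdd k⟩
  have hdiff : Tendsto (fun k => F k - F (k + 1)) atTop (nhds 0) := by
    have h1 := hconv.comp (tendsto_add_atTop_nat 1)
    have := hconv.sub h1
    simpa using this
  have hsq : Tendsto (fun k => ‖x (k + 1) - x k‖ ^ 2) atTop (nhds 0) := by
    have h0 : ∀ k, (0:ℝ) ≤ ‖x (k + 1) - x k‖ ^ 2 := fun k => sq_nonneg _
    have hle : ∀ k, ‖x (k + 1) - x k‖ ^ 2 ≤ (2 / b) * (F k - F (k + 1)) := by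
      intro k
      have hk := key k
      rw [div_mul_eq_mul_div, le_div_iff₀ hb]
      nlinarith
    have hlim : Tendsto (fun k => (2 / b) * (F k - F (k + 1))) atTop (nhds 0) := by
      simpa using hdiff.const_mul (2 / b)
    exact squeeze_zero h0 hle hlim
  have h := (Real.continuous_sqrt.tendsto 0).comp hsq
  have h2 : Tendsto (fun k => Real.sqrt (‖x (k + 1) - x k‖ ^ 2)) atTop (nhds 0) := by
    simpa [Function.comp_def] using h
  exact h2.congr fun k => Real.sqrt_sq (norm_nonneg _)
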